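/- Let 𝒜 ∈ ℝ^{d₁×⋯×dₙ} be a tensor with multilinear rank (r₁,…,rₙ). Let I_i ⊆ [d_i] and J_i ⊆ [∏_{j≠i} d_j] be index sets, and set ℛ = 𝒜(I₁,…,Iₙ), C_i = 𝒜_(i)(:,J_i), U_i = C_i(I_i,:). Then the following are equivalent: (i) rank(U_i) = r_i for all i = 1,…,n; (ii) 𝒜 = ℛ ×₁ (C₁U₁†) ×₂ ⋯ ×ₙ (CₙUₙ†); (iii) rank(C_i) = r_i for all i and the multilinear rank of ℛ is (r₁,…,rₙ). -/

import Mathlib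

/-!
If `U_i = 𝒜_(i)(I_i, J_i)` already has the full rank `r_i` of `𝒜_(i)`, then so do the row block
`𝒜_(i)(I_i, :)` and the column block `C_i`; hence `𝒜_(i) = Y 𝒜_(i)(I_i, :)`,
`𝒜_(i)(I_i, :) = U_i Z` and `C_i = Y U_i`, so `C_i U_i† 𝒜_(i)(I_i, :) = Y U_i U_i† U_i Z = 𝒜_(i)`.
A family of mode factors each of which fixes its unfolding fixes the tensor, and
`ℛ ×₁ B₁ ⋯ ×ₙ Bₙ = 𝒜 ×₁ (B₁ S₁) ⋯ ×ₙ (Bₙ Sₙ)` with `S_i` the row selection of `I_i`; this gives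
(i) ⇒ (ii). Conversely the mode-`i` unfolding of `ℛ ×₁ B₁ ⋯ ×ₙ Bₙ` is
`B_i ℛ_(i) (⊗_{j ≠ i} B_j)ᵀ`, which bounds `r_i` by `rank C_i` and by `rank ℛ_(i)`: (ii) ⇒ (iii).
Finally `rank C_i = r_i` gives `𝒜_(i) = C_i X`, so `𝒜_(i)(I_i, :) = U_i X`, and
`r_i = rank ℛ_(i) ≤ rank 𝒜_(i)(I_i, :) ≤ rank U_i`: (iii) ⇒ (i).
-/

open scoped BigOperators
open Matrix

noncomputable section

namespace TCUR

/-- Euclidean norm of a finite real vector. -/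
def enorm {ι : Type*} [Fintype ι] (x : ι → ℝ) : ℝ :=
  Real.sqrt (∑ i, x i ^ 2)

/-- Frobenius norm of a real matrix. -/
def frob {m n : Type*} [Fintype m] [Fintype n] (A : Matrix m n ℝ) : ℝ :=
  Real.sqrt (∑ i, ∑ j, A i j ^ 2)

/-- Spectral norm of a real matrix. -/
def spec {m n : Type*} [Fintype m] [Fintype n] (A : Matrix m n ℝ) : ℝ :=
  sSup ((fun x => enorm (A.mulVec x)) '' {x : n → ℝ | enorm x ≤ 1})

/-- The four Penrose conditions: `B` is the Moore–Penrose pseudoinverse of `A`. -/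
def IsMP {m n : Type*} [Fintype m] [Fintype n] (A : Matrix m n ℝ) (B : Matrix n m ℝ) : Prop :=
  A * B * A = A ∧ B * A * B = B ∧ (A * B)ᵀ = A * B ∧ (B * A)ᵀ = B * A

open Classical in
/-- Moore–Penrose pseudoinverse of a real matrix (def body). -/
def pinv {m n : Type*} [Fintype m] [Fintype n] (A : Matrix m n ℝ) : Matrix n m ℝ :=
  if h : ∃ B, IsMP A B then h.choose else 0

/-- `sval k A` is the `k`-th largest singular value of `A`
(via the Eckart–Young characterization). -/
def sval {m n : Type*} [Fintype m] [Fintype n] (k : ℕ) (A : Matrix m n ℝ) : ℝ :=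
  sInf ((fun B => spec (A - B)) '' {B : Matrix m n ℝ | B.rank < k})

/-- `IsBestRank r A Ar`: `Ar` is a best rank-`r` (Frobenius) approximation of `A`,
 e.g. a rank-`r` truncated SVD of `A`. -/
def IsBestRank {m n : Type*} [Fintype m] [Fintype n] (r : ℕ) (A Ar : Matrix m n ℝ) : Prop :=
  Ar.rank ≤ r ∧ ∀ B : Matrix m n ℝ, B.rank ≤ r → frob (A - Ar) ≤ frob (A - B)

/-- Compact SVD data: `A = W * S * Vᵀ` with `W, V` having orthonormal columns and
`S` diagonal with positive diagonal entries. -/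
def CompactSVD {m n : Type*} [Fintype m] [Fintype n] {r : ℕ} (A : Matrix m n ℝ)
    (W : Matrix m (Fin r) ℝ) (S : Matrix (Fin r) (Fin r) ℝ) (V : Matrix n (Fin r) ℝ) : Prop :=
  A = W * S * Vᵀ ∧ Wᵀ * W = 1 ∧ Vᵀ * V = 1 ∧ (∀ i j, i ≠ j → S i j = 0) ∧ ∀ i, 0 < S i i

/-- Coherence `μ(W) = (d/r) max_i ‖W(i,:)‖₂²` of a matrix with orthonormal columns. -/
def coh {m r : Type*} [Fintype m] [Fintype r] (W : Matrix m r ℝ) : ℝ :=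
  ((Fintype.card m : ℝ) / (Fintype.card r : ℝ)) * ⨆ i : m, ∑ j, W i j ^ 2

/-- Row submatrix with rows restricted to `I`. -/
def rowsub {m k : Type*} (M : Matrix m k ℝ) (I : Finset m) : Matrix {x // x ∈ I} k ℝ :=
  M.submatrix Subtype.val id

/-- Probability, with respect to the uniform distribution on the finite sample space
`{ω : Ω | cond ω}`, of the event `{ω | event ω}`. -/
def uniformProb {Ω : Type*} [Fintype Ω] (cond event : Ω → Prop) : ℝ :=
  (Nat.card {ω : Ω // cond ω ∧ event ω} : ℝ) / (Nat.card {ω : Ω // cond ω} : ℝ)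

variable {n : ℕ}

/-- Mode-`k` unfolding of an `n`-mode tensor: the matrix whose columns are the
mode-`k` fibers of the tensor. -/
def unfold {ι : Fin n → Type*} (A : ((i : Fin n) → ι i) → ℝ) (k : Fin n) :
    Matrix (ι k) ((j : {j : Fin n // j ≠ k}) → ι j.1) ℝ :=
  fun x y => A fun i => if h : i = k then cast (congrArg ι h.symm) x else y ⟨i, h⟩

/-- Tucker (all-modes) product `T ×₁ M 1 ×₂ ⋯ ×ₙ M n`. -/
def tucker {ι κ : Fin n → Type*} [∀ i, Fintype (κ i)]
    (T : ((i : Fin n) → κ i) → ℝ) (M : (i : Fin n) → Matrix (ι i) (κ i) ℝ) :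
    ((i : Fin n) → ι i) → ℝ :=
  fun x => ∑ y : (i : Fin n) → κ i, (∏ i, M i (x i) (y i)) * T y

/-- The subtensor with mode-`i` indices restricted to `I i`. -/
def subT {ι : Fin n → Type*} (A : ((i : Fin n) → ι i) → ℝ)
    (I : (i : Fin n) → Finset (ι i)) : ((i : Fin n) → {x // x ∈ I i}) → ℝ :=
  fun x => A fun i => (x i).1

/-- Frobenius norm of a tensor. -/
def tfrob {ι : Fin n → Type*} [∀ i, Fintype (ι i)] (A : ((i : Fin n) → ι i) → ℝ) : ℝ :=
  Real.sqrt (∑ x : (i : Fin n) → ι i, A x ^ 2)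

/-- `Cmat A J i = 𝒜_(i)(:,J_i)`: the mode-`i` unfolding restricted to the columns `J i`. -/
def Cmat {ι : Fin n → Type*} (A : ((i : Fin n) → ι i) → ℝ)
    (J : (i : Fin n) → Finset ((j : {j : Fin n // j ≠ i}) → ι j.1)) (i : Fin n) :
    Matrix (ι i) {y // y ∈ J i} ℝ :=
  (unfold A i).submatrix id Subtype.val

/-- `Umat A I J i = 𝒜_(i)(I_i,J_i)`. -/
def Umat {ι : Fin n → Type*} (A : ((i : Fin n) → ι i) → ℝ)
    (I : (i : Fin n) → Finset (ι i))
    (J : (i : Fin n) → Finset ((j : {j : Fin n // j ≠ i}) → ι j.1)) (i : Fin n) :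
    Matrix {x // x ∈ I i} {y // y ∈ J i} ℝ :=
  (unfold A i).submatrix Subtype.val Subtype.val

/-- The Chidori column index set `⊗_{j ≠ i} I j`. -/
def chidoriJ {ι : Fin n → Type*} (I : (i : Fin n) → Finset (ι i)) (i : Fin n) :
    Finset ((j : {j : Fin n // j ≠ i}) → ι j.1) :=
  Fintype.piFinset fun j => I j.1

/-- `σ_max(𝒜) = max_j σ₁(𝒜_(j))`. -/
def tsmax {ι : Fin n → Type*} [∀ i, Fintype (ι i)] (A : ((i : Fin n) → ι i) → ℝ) : ℝ :=
  ⨆ j, sval 1 (unfold A j)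

/-- `σ_min(𝒜) = min_j σ_{r_j}(𝒜_(j))`. -/
def tsmin {ι : Fin n → Type*} [∀ i, Fintype (ι i)] (A : ((i : Fin n) → ι i) → ℝ)
    (r : Fin n → ℕ) : ℝ :=
  ⨅ j, sval (r j) (unfold A j)

section MatrixRank

variable {K : Type*} [Field K] {l m p q : Type*} [Fintype m] [Fintype q]

theorem isUnit_det_of_rank_eq_card [Fintype l] [DecidableEq l] {M : Matrix l l K}
    (h : M.rank = Fintype.card l) : IsUnit M.det := by
  rw [← isUnit_iff_isUnit_det, ← mulVec_surjective_iff_isUnit, ← Matrix.coe_mulVecLin,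
    ← LinearMap.range_eq_top]
  exact Submodule.eq_top_of_finrank_eq (h.trans (Module.finrank_fintype_fun_eq_card K).symm)

theorem exists_mul_eq_of_rank_eq (A : Matrix l m K) {r : ℕ} (hr : A.rank = r) :
    ∃ (F : Matrix l (Fin r) K) (G : Matrix (Fin r) m K), F * G = A := by
  classical
  let e : LinearMap.range A.mulVecLin ≃ₗ[K] (Fin r → K) :=
    (Module.finBasisOfFinrankEq K _ hr).equivFun
  refine ⟨LinearMap.toMatrix' ((LinearMap.range A.mulVecLin).subtype ∘ₗ e.symm.toLinearMap),
    LinearMap.toMatrix' (e.toLinearMap ∘ₗ A.mulVecLin.rangeRestrict), ?_⟩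
  have hcomp : ((LinearMap.range A.mulVecLin).subtype ∘ₗ e.symm.toLinearMap) ∘ₗ
      (e.toLinearMap ∘ₗ A.mulVecLin.rangeRestrict) = Matrix.toLin' A := by
    ext x
    simp
  rw [← LinearMap.toMatrix'_comp, hcomp, LinearMap.toMatrix'_toLin']

theorem exists_eq_submatrix_mul_of_rank_eq (A : Matrix l m K) (g : q → m)
    (h : (A.submatrix id g).rank = A.rank) : ∃ X : Matrix q m K, A = A.submatrix id g * X := by
  classical
  have hle : LinearMap.range (A.submatrix id g).mulVecLin ≤ LinearMap.range A.mulVecLin := by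
    rw [range_mulVecLin, range_mulVecLin]
    exact Submodule.span_mono (Set.range_subset_iff.2 fun k => ⟨g k, rfl⟩)
  have hcol : ∀ j, A *ᵥ Pi.single j 1 ∈ LinearMap.range (A.submatrix id g).mulVecLin := by
    rw [Submodule.eq_of_le_of_finrank_eq hle h]
    exact fun j => ⟨Pi.single j 1, rfl⟩
  choose X hX using hcol
  refine ⟨(Matrix.of X)ᵀ, ?_⟩
  ext i j
  have hij := congrFun (hX j) i
  rw [mulVecLin_apply, mulVec_single_one] at hij
  simpa [Matrix.mul_apply, Matrix.mulVec, dotProduct] using hij.symm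

theorem exists_eq_mul_submatrix_of_rank_eq [Fintype l] [Fintype p] (A : Matrix l m K) (f : p → l)
    (h : (A.submatrix f id).rank = A.rank) : ∃ Y : Matrix l p K, A = Y * A.submatrix f id := by
  obtain ⟨X, hX⟩ := exists_eq_submatrix_mul_of_rank_eq Aᵀ f
    (by rwa [← transpose_submatrix, rank_transpose, rank_transpose])
  exact ⟨Xᵀ, by simpa [transpose_mul] using congrArg transpose hX⟩

theorem rank_submatrix_row_le_of_rank_submatrix_col_eq {A : Matrix l m K} (f : p → l)
    {g : q → m} (h : (A.submatrix id g).rank = A.rank) :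
    (A.submatrix f id).rank ≤ (A.submatrix f g).rank := by
  obtain ⟨X, hX⟩ := exists_eq_submatrix_mul_of_rank_eq A g h
  have hrows : A.submatrix f id = A.submatrix f g * X := congrArg (·.submatrix f id) hX
  exact hrows ▸ rank_mul_le_left _ _

theorem submatrix_mul_mul_submatrix_eq_self [Fintype l] [Fintype p] {A : Matrix l m K}
    {f : p → l} {g : q → m} (h : (A.submatrix f g).rank = A.rank) {X : Matrix q p K}
    (hX : A.submatrix f g * X * A.submatrix f g = A.submatrix f g) :
    A.submatrix id g * X * A.submatrix f id = A := by
  have hrow : (A.submatrix f id).rank = A.rank :=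
    le_antisymm (rank_submatrix_le _ _ _) (h ▸ rank_submatrix_le (A.submatrix f id) id g)
  obtain ⟨Y, hY⟩ := exists_eq_mul_submatrix_of_rank_eq A f hrow
  obtain ⟨Z, hZ⟩ := exists_eq_submatrix_mul_of_rank_eq (A.submatrix f id) g (hrow ▸ h)
  have hC : A.submatrix id g = Y * A.submatrix f g := congrArg (·.submatrix id g) hY
  have hR : A.submatrix f id = A.submatrix f g * Z := hZ
  calc A.submatrix id g * X * A.submatrix f id
      = Y * (A.submatrix f g * X * A.submatrix f g) * Z := by
        rw [hC, hR]; simp only [Matrix.mul_assoc]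
    _ = A := by rw [hX, Matrix.mul_assoc, ← hR, ← hY]

/-- From a full-rank factorization `A = F G`, the pseudoinverse is
`Gᵀ (G Gᵀ)⁻¹ (Fᵀ F)⁻¹ Fᵀ`. -/
theorem exists_isMP [Fintype l] (A : Matrix l m ℝ) : ∃ B, IsMP A B := by
  classical
  obtain ⟨r, hr⟩ : ∃ r, A.rank = r := ⟨_, rfl⟩
  obtain ⟨F, G, rfl⟩ := exists_mul_eq_of_rank_eq A hr
  have hF : F.rank = r := le_antisymm
    (F.rank_le_card_width.trans_eq (Fintype.card_fin r)) (hr.symm.trans_le (rank_mul_le_left F G))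
  have hG : G.rank = r := le_antisymm
    (G.rank_le_card_height.trans_eq (Fintype.card_fin r)) (hr.symm.trans_le (rank_mul_le_right F G))
  have hP : IsUnit (Fᵀ * F).det :=
    isUnit_det_of_rank_eq_card (by rw [rank_transpose_mul_self, hF, Fintype.card_fin])
  have hQ : IsUnit (G * Gᵀ).det :=
    isUnit_det_of_rank_eq_card (by rw [rank_self_mul_transpose, hG, Fintype.card_fin])
  set P := (Fᵀ * F)⁻¹
  set Q := (G * Gᵀ)⁻¹
  have hPt : Pᵀ = P := by rw [transpose_nonsing_inv, transpose_mul, transpose_transpose]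
  have hQt : Qᵀ = Q := by rw [transpose_nonsing_inv, transpose_mul, transpose_transpose]
  have hAB : F * G * (Gᵀ * Q * P * Fᵀ) = F * P * Fᵀ :=
    calc F * G * (Gᵀ * Q * P * Fᵀ) = F * (G * Gᵀ * Q) * P * Fᵀ := by simp only [Matrix.mul_assoc]
      _ = F * P * Fᵀ := by rw [mul_nonsing_inv _ hQ, Matrix.mul_one]
  have hBA : Gᵀ * Q * P * Fᵀ * (F * G) = Gᵀ * Q * G :=
    calc Gᵀ * Q * P * Fᵀ * (F * G) = Gᵀ * Q * (P * (Fᵀ * F)) * G := by simp only [Matrix.mul_assoc]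
      _ = Gᵀ * Q * G := by rw [nonsing_inv_mul _ hP, Matrix.mul_one]
  refine ⟨Gᵀ * Q * P * Fᵀ, ?_, ?_, ?_, ?_⟩
  · calc F * G * (Gᵀ * Q * P * Fᵀ) * (F * G) = F * (P * (Fᵀ * F)) * G := by
          rw [hAB]; simp only [Matrix.mul_assoc]
      _ = F * G := by rw [nonsing_inv_mul _ hP, Matrix.mul_one]
  · calc Gᵀ * Q * P * Fᵀ * (F * G) * (Gᵀ * Q * P * Fᵀ) = Gᵀ * (Q * (G * Gᵀ)) * Q * P * Fᵀ := by
          rw [hBA]; simp only [Matrix.mul_assoc]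
      _ = Gᵀ * Q * P * Fᵀ := by rw [nonsing_inv_mul _ hQ, Matrix.mul_one]
  · rw [hAB]; simp only [transpose_mul, transpose_transpose, hPt, Matrix.mul_assoc]
  · rw [hBA]; simp only [transpose_mul, transpose_transpose, hQt, Matrix.mul_assoc]

theorem mul_pinv_mul_self [Fintype l] (A : Matrix l m ℝ) : A * pinv A * A = A := by
  have h := exists_isMP A
  rw [pinv, dif_pos h]
  exact h.choose_spec.1

end MatrixRank

section Tensor

variable {ι κ ν : Fin n → Type*}

theorem piSplitAt_symm_apply_self {β : Fin n → Type*} (i : Fin n) (a : β i)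
    (y : (j : {j : Fin n // j ≠ i}) → β j.1) : (Equiv.piSplitAt i β).symm (a, y) i = a :=
  congrArg Prod.fst ((Equiv.piSplitAt i β).apply_symm_apply (a, y))

theorem piSplitAt_symm_apply_coe {β : Fin n → Type*} {i : Fin n} (a : β i)
    (y : (j : {j : Fin n // j ≠ i}) → β j.1) (j : {j : Fin n // j ≠ i}) :
    (Equiv.piSplitAt i β).symm (a, y) j = y j :=
  congrFun (congrArg Prod.snd ((Equiv.piSplitAt i β).apply_symm_apply (a, y))) j

theorem unfold_apply (A : ((i : Fin n) → ι i) → ℝ) (k : Fin n) (a : ι k)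
    (y : (j : {j : Fin n // j ≠ k}) → ι j.1) :
    unfold A k a y = A ((Equiv.piSplitAt k ι).symm (a, y)) := by
  refine congrArg A (funext fun j => ?_)
  by_cases h : j = k
  · subst h
    rw [dif_pos rfl, piSplitAt_symm_apply_self]
    rfl
  · rw [dif_neg h]
    exact (piSplitAt_symm_apply_coe a y ⟨j, h⟩).symm

theorem unfold_injective (k : Fin n) :
    Function.Injective fun A : ((i : Fin n) → ι i) → ℝ => unfold A k := by
  intro A A' (h : unfold A k = unfold A' k)
  funext x
  have hx := congrFun (congrFun h (x k)) fun j => x j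
  rwa [unfold_apply, unfold_apply, ← Equiv.piSplitAt_apply, Equiv.symm_apply_apply] at hx

theorem unfold_subT (A : ((i : Fin n) → ι i) → ℝ) (I : (i : Fin n) → Finset (ι i)) (i : Fin n) :
    unfold (subT A I) i = (unfold A i).submatrix Subtype.val fun z j => (z j).1 := by
  ext a z
  simp only [unfold, subT, submatrix_apply]
  congr 1
  funext j
  split_ifs with h
  · subst h; rfl
  · rfl

theorem rank_unfold_subT_le [∀ i, Fintype (ι i)] (A : ((i : Fin n) → ι i) → ℝ)
    (I : (i : Fin n) → Finset (ι i)) (i : Fin n) :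
    (unfold (subT A I) i).rank ≤
      ((unfold A i).submatrix (Subtype.val : {x // x ∈ I i} → ι i) id).rank := by
  have h := rank_submatrix_le ((unfold A i).submatrix (Subtype.val : I i → ι i) id) id
    fun (z : (j : {j : Fin n // j ≠ i}) → I j.1) j => (z j).1
  rwa [submatrix_submatrix, Function.comp_id, Function.id_comp, ← unfold_subT] at h

/-- `⊗_{j ≠ i} B_j`, indexed like the columns of the mode-`i` unfolding. -/
def kronExcept (B : (i : Fin n) → Matrix (ι i) (κ i) ℝ) (i : Fin n) :
    Matrix ((j : {j : Fin n // j ≠ i}) → ι j.1) ((j : {j : Fin n // j ≠ i}) → κ j.1) ℝ :=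
  of fun z y => ∏ j, B j.1 (z j) (y j)

theorem kronExcept_update (B : (i : Fin n) → Matrix (ι i) (κ i) ℝ) (i : Fin n)
    (N : Matrix (ι i) (κ i) ℝ) : kronExcept (Function.update B i N) i = kronExcept B i := by
  ext z y
  simp only [kronExcept, of_apply]
  exact Finset.prod_congr rfl fun j _ => by rw [Function.update_of_ne j.2]

variable [∀ i, Fintype (κ i)]

theorem unfold_tucker (T : ((i : Fin n) → κ i) → ℝ) (B : (i : Fin n) → Matrix (ι i) (κ i) ℝ)
    (i : Fin n) : unfold (tucker T B) i = B i * unfold T i * (kronExcept B i)ᵀ := by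
  ext a z
  rw [unfold_apply, tucker, ← (Equiv.piSplitAt i κ).symm.sum_comp, Fintype.sum_prod_type]
  simp only [mul_apply, transpose_apply, kronExcept, of_apply, Finset.sum_mul, unfold_apply]
  rw [Finset.sum_comm]
  refine Finset.sum_congr rfl fun c _ => Finset.sum_congr rfl fun w _ => ?_
  rw [Fintype.prod_eq_mul_prod_subtype_ne _ i]
  simp only [piSplitAt_symm_apply_self, piSplitAt_symm_apply_coe]
  ring

theorem unfold_tucker_update_mul [∀ i, Fintype (ι i)] (T : ((i : Fin n) → κ i) → ℝ)
    (B : (i : Fin n) → Matrix (ι i) (κ i) ℝ) (i : Fin n) (N : Matrix (ι i) (ι i) ℝ) :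
    unfold (tucker T (Function.update B i (N * B i))) i = N * unfold (tucker T B) i := by
  rw [unfold_tucker, unfold_tucker, kronExcept_update, Function.update_self]
  simp only [Matrix.mul_assoc]

theorem tucker_tucker [∀ i, Fintype (ν i)] (T : ((i : Fin n) → ν i) → ℝ)
    (C : (i : Fin n) → Matrix (κ i) (ν i) ℝ) (B : (i : Fin n) → Matrix (ι i) (κ i) ℝ) :
    tucker (tucker T C) B = tucker T fun i => B i * C i := by
  funext x
  simp only [tucker, mul_apply, Fintype.prod_sum, Finset.prod_mul_distrib, Finset.mul_sum,
    Finset.sum_mul]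
  rw [Finset.sum_comm]
  simp only [mul_assoc]

theorem tucker_submatrix_one [∀ i, DecidableEq (κ i)] (T : ((i : Fin n) → κ i) → ℝ)
    (f : (i : Fin n) → ι i → κ i) :
    tucker T (fun i => (1 : Matrix (κ i) (κ i) ℝ).submatrix (f i) id) =
      fun x => T fun i => f i (x i) := by
  funext x
  rw [tucker, Finset.sum_eq_single fun i => f i (x i)]
  · simp [one_apply]
  · intro y _ hy
    obtain ⟨i, hi⟩ := Function.ne_iff.1 hy
    rw [Finset.prod_eq_zero (Finset.mem_univ i) (by simp [one_apply, Ne.symm hi]), zero_mul]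
  · simp

theorem tucker_one [∀ i, DecidableEq (κ i)] (T : ((i : Fin n) → κ i) → ℝ) :
    tucker T (fun _ => 1) = T := by
  simpa using tucker_submatrix_one T fun _ => id

theorem rank_unfold_tucker_le_rank [∀ i, Fintype (ι i)] (T : ((i : Fin n) → κ i) → ℝ)
    (B : (i : Fin n) → Matrix (ι i) (κ i) ℝ) (i : Fin n) :
    (unfold (tucker T B) i).rank ≤ (B i).rank := by
  rw [unfold_tucker, Matrix.mul_assoc]
  exact rank_mul_le_left _ _

theorem rank_unfold_tucker_le_rank_unfold [∀ i, Fintype (ι i)] (T : ((i : Fin n) → κ i) → ℝ)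
    (B : (i : Fin n) → Matrix (ι i) (κ i) ℝ) (i : Fin n) :
    (unfold (tucker T B) i).rank ≤ (unfold T i).rank := by
  rw [unfold_tucker]
  exact (rank_mul_le_left _ _).trans (rank_mul_le_right _ _)

end Tensor

section Subtensor

variable {ι : Fin n → Type*} [∀ i, Fintype (ι i)] [∀ i, DecidableEq (ι i)]

/-- Switch the factors from `1` to `M i` one mode at a time: by `unfold_tucker_update_mul`
each switch multiplies the mode-`a` unfolding on the left by `M a`, which fixes it. -/
theorem tucker_eq_self_of_mul_unfold (A : ((i : Fin n) → ι i) → ℝ)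
    (M : (i : Fin n) → Matrix (ι i) (ι i) ℝ) (hM : ∀ i, M i * unfold A i = unfold A i) :
    tucker A M = A := by
  suffices h : ∀ s : Finset (Fin n), tucker A (fun i => if i ∈ s then M i else 1) = A by
    simpa using h Finset.univ
  intro s
  induction s using Finset.induction_on with
  | empty => simpa using tucker_one A
  | insert a s ha ih =>
    have hstep : (fun i => if i ∈ insert a s then M i else 1) =
        Function.update (fun i => if i ∈ s then M i else 1) a
          (M a * if a ∈ s then M a else 1) := by
      funext j
      by_cases h : j = a
      · subst h; simp [ha]
      · simp [h]
    apply unfold_injective a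
    simp only [hstep, unfold_tucker_update_mul, ih, hM]

theorem subT_eq_tucker (A : ((i : Fin n) → ι i) → ℝ) (I : (i : Fin n) → Finset (ι i)) :
    subT A I = tucker A fun i => (1 : Matrix (ι i) (ι i) ℝ).submatrix Subtype.val id := by
  rw [tucker_submatrix_one]
  rfl

theorem tucker_subT_eq_self (A : ((i : Fin n) → ι i) → ℝ) (I : (i : Fin n) → Finset (ι i))
    (B : (i : Fin n) → Matrix (ι i) {x // x ∈ I i} ℝ)
    (hB : ∀ i, B i * (unfold A i).submatrix Subtype.val id = unfold A i) :
    tucker (subT A I) B = A := by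
  rw [subT_eq_tucker, tucker_tucker]
  refine tucker_eq_self_of_mul_unfold A _ fun i => ?_
  have hsel : (1 : Matrix (ι i) (ι i) ℝ).submatrix (Subtype.val : I i → ι i) id * unfold A i =
      (unfold A i).submatrix Subtype.val id := by
    simpa using one_submatrix_mul Subtype.val (Equiv.refl _) (unfold A i)
  rw [Matrix.mul_assoc, hsel]
  exact hB i

end Subtensor

/-- **Fiber CUR characterization** (Theorem `thm: CUR Char`).
For a tensor `A` of multilinear rank `(r 1, …, r n)` with `ℛ = A(I₁,…,Iₙ)`,
`Cᵢ = A_(i)(:,Jᵢ)`, `Uᵢ = Cᵢ(Iᵢ,:)`, the following are equivalent: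
(i) `rank Uᵢ = rᵢ` for all `i`;
(ii) `A = ℛ ×₁ (C₁U₁†) ×₂ ⋯ ×ₙ (CₙUₙ†)`;
(iii) `rank Cᵢ = rᵢ` for all `i` and the multilinear rank of `ℛ` is `(r₁,…,rₙ)`. -/
theorem fiber_cur_characterization {n : ℕ} {d : Fin n → ℕ}
    (A : ((i : Fin n) → Fin (d i)) → ℝ) (r : Fin n → ℕ)
    (hrank : ∀ i, (unfold A i).rank = r i)
    (I : (i : Fin n) → Finset (Fin (d i)))
    (J : (i : Fin n) → Finset ((j : {j : Fin n // j ≠ i}) → Fin (d j.1))) :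
    ((∀ i, (Umat A I J i).rank = r i) ↔
        A = tucker (subT A I) fun i => Cmat A J i * pinv (Umat A I J i)) ∧
    ((A = tucker (subT A I) fun i => Cmat A J i * pinv (Umat A I J i)) ↔
        ((∀ i, (Cmat A J i).rank = r i) ∧ ∀ i, (unfold (subT A I) i).rank = r i)) := by
  set B := fun i => Cmat A J i * pinv (Umat A I J i)
  have hU_le : ∀ i, (Umat A I J i).rank ≤ r i := fun i => hrank i ▸ rank_submatrix_le _ _ _
  have hC_le : ∀ i, (Cmat A J i).rank ≤ r i := fun i => hrank i ▸ rank_submatrix_le _ _ _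
  have hR_le : ∀ i, (unfold (subT A I) i).rank ≤ r i := fun i =>
    hrank i ▸ (rank_unfold_subT_le A I i).trans (rank_submatrix_le _ _ _)
  have i_ii : (∀ i, (Umat A I J i).rank = r i) → A = tucker (subT A I) B := fun hU =>
    (tucker_subT_eq_self A I B fun i =>
      submatrix_mul_mul_submatrix_eq_self ((hU i).trans (hrank i).symm) (mul_pinv_mul_self _)).symm
  have ii_iii : A = tucker (subT A I) B →
      (∀ i, (Cmat A J i).rank = r i) ∧ ∀ i, (unfold (subT A I) i).rank = r i := by
    intro hA
    have hrankB : ∀ i, (unfold (tucker (subT A I) B) i).rank = r i := by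
      rw [← hA]; exact hrank
    exact ⟨fun i => le_antisymm (hC_le i) <| (hrankB i).symm.trans_le <|
        (rank_unfold_tucker_le_rank _ B i).trans (rank_mul_le_left _ _),
      fun i => le_antisymm (hR_le i) <| (hrankB i).symm.trans_le <|
        rank_unfold_tucker_le_rank_unfold _ B i⟩
  have iii_i : (∀ i, (Cmat A J i).rank = r i) ∧ (∀ i, (unfold (subT A I) i).rank = r i) →
      ∀ i, (Umat A I J i).rank = r i := fun ⟨hC, hR⟩ i =>
    le_antisymm (hU_le i) <| (hR i).symm.trans_le <| (rank_unfold_subT_le A I i).trans <|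
      rank_submatrix_row_le_of_rank_submatrix_col_eq _ ((hC i).trans (hrank i).symm)
  exact ⟨⟨i_ii, iii_i ∘ ii_iii⟩, ⟨ii_iii, i_ii ∘ iii_i⟩⟩

end TCUR
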